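/- arXiv:2601.18412 — 6 statements merged into one kernel-verified Lean document; each statement's English description precedes it below -/
import Mathlib

section
/- The population risk L_F is convex on L¹(F): for measurable θ₀, θ₁ with E_F|θ₀|, E_F|θ₁| < ∞ and λ ∈ [0,1], L_F((1−λ)θ₀ + λθ₁) ≤ (1−λ)L_F(θ₀) + λL_F(θ₁). Moreover, L_F is strictly convex on the centered class: if θ₀, θ₁ ∈ L²(F) both have E_F-mean zero and θ₀ ≠ θ₁ as elements of L²(F) (i.e., F{θ₀ ≠ θ₁} > 0), then L_F((θ₀+θ₁)/2) < (L_F(θ₀) + L_F(θ₁))/2. -/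
/-!
Since `log σ(t) = t + log σ(-t)` and `-log σ(-t) = log (1 + e^t)`, the loss is
`ℓ_p(t) = log (1 + e^t) - p t`: a strictly convex function (its derivative is the strictly
increasing `σ`) plus a linear one, and `|ℓ_p(t)| ≤ log 2 + 2|t|` for `p ∈ [0, 1]` makes `L_F`
finite on `L¹(F)`.
Since `θ ↦ θ(Y) - θ(X)` is linear, pointwise convexity of `ℓ_p` integrates to convexity of
`L_F`, and the inequality is strict as soon as the two increments differ on a set of positive
`F ⊗ F`-measure. If instead `θ₁(Y) - θ₀(Y) = θ₁(X) - θ₀(X)` for `F ⊗ F`-a.e. `(X, Y)`, then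
`θ₁ - θ₀` is a.e. constant, and equal means force that constant to be `0`.
-/

open MeasureTheory

/-- The logistic function `σ(t) = 1/(1+e^{-t})`. -/
noncomputable def logistic (t : ℝ) : ℝ := 1 / (1 + Real.exp (-t))

/-- The pointwise cross-entropy loss `ℓ_p(t) = -p log σ(t) - (1-p) log σ(-t)`. -/
noncomputable def ceLoss (p t : ℝ) : ℝ :=
  -p * Real.log (logistic t) - (1 - p) * Real.log (logistic (-t))

/-- The preference probability `p_F(x,y) = P_{Z∼F}{δ(Z,x) > δ(Z,y)}`. -/
noncomputable def prefProb {X : Type*} [MeasurableSpace X] (F : Measure X)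
    (δ : X → X → ℝ) (x y : X) : ℝ :=
  (F {z | δ z y < δ z x}).toReal

/-- The population cross-entropy risk
`L_F(θ) = E_{X,Y i.i.d. ∼ F} [ℓ_{p_F(X,Y)}(θ(Y) - θ(X))]`. -/
noncomputable def popRisk {X : Type*} [MeasurableSpace X] (F : Measure X)
    (δ : X → X → ℝ) (θ : X → ℝ) : ℝ :=
  ∫ q, ceLoss (prefProb F δ q.1 q.2) (θ q.2 - θ q.1) ∂(F.prod F)

open Real Set

lemma hasDerivAt_log_one_add_exp (t : ℝ) :
    HasDerivAt (fun t => log (1 + exp t)) (sigmoid t) t := by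
  convert ((hasDerivAt_exp t).const_add 1).log (by positivity) using 1
  rw [sigmoid_def, exp_neg]
  field_simp
  ring

lemma continuous_log_one_add_exp : Continuous fun t => log (1 + exp t) :=
  (continuous_const.add continuous_exp).log fun t => (add_pos one_pos (exp_pos t)).ne'

lemma strictConvexOn_log_one_add_exp : StrictConvexOn ℝ univ fun t => log (1 + exp t) := by
  refine StrictMono.strictConvexOn_univ_of_deriv continuous_log_one_add_exp ?_
  rw [funext fun t => (hasDerivAt_log_one_add_exp t).deriv]
  exact sigmoid_strictMono

lemma log_one_add_exp_le (t : ℝ) : log (1 + exp t) ≤ log 2 + |t| := by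
  have h : 1 + exp t ≤ 2 * exp |t| := by
    linarith [exp_le_exp.2 (le_abs_self t), one_le_exp (abs_nonneg t)]
  calc log (1 + exp t) ≤ log (2 * exp |t|) := log_le_log (by positivity) h
    _ = log 2 + |t| := by rw [log_mul two_ne_zero (exp_ne_zero _), log_exp]

lemma ceLoss_eq_log_one_add_exp_sub (p t : ℝ) : ceLoss p t = log (1 + exp t) - p * t := by
  have h : 1 + exp (-t) = exp (-t) * (1 + exp t) := by
    rw [mul_add, mul_one, ← exp_add, neg_add_cancel, exp_zero, add_comm]
  simp only [ceLoss, logistic, one_div, log_inv, neg_neg, h,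
    log_mul (exp_ne_zero _) (by positivity : 1 + exp t ≠ 0), log_exp]
  ring

lemma continuous_ceLoss : Continuous (Function.uncurry ceLoss) := by
  simp only [Function.uncurry_def, ceLoss_eq_log_one_add_exp_sub]
  exact (continuous_log_one_add_exp.comp continuous_snd).sub (continuous_fst.mul continuous_snd)

lemma strictConvexOn_ceLoss (p : ℝ) : StrictConvexOn ℝ univ (ceLoss p) := by
  rw [funext (ceLoss_eq_log_one_add_exp_sub p)]
  exact strictConvexOn_log_one_add_exp.sub_concaveOn
    ((LinearMap.mul ℝ ℝ p).concaveOn convex_univ)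

lemma abs_ceLoss_le {p : ℝ} (hp : p ∈ Icc (0 : ℝ) 1) (t : ℝ) :
    |ceLoss p t| ≤ log 2 + 2 * |t| := by
  have hsoft : 0 ≤ log (1 + exp t) := log_nonneg (by linarith [exp_pos t])
  have hpt : |p * t| ≤ |t| := by
    rw [abs_mul, abs_of_nonneg hp.1]
    exact mul_le_of_le_one_left (abs_nonneg t) hp.2
  rw [ceLoss_eq_log_one_add_exp_sub]
  calc |log (1 + exp t) - p * t| ≤ |log (1 + exp t)| + |p * t| := abs_sub _ _
    _ ≤ log 2 + 2 * |t| := by rw [abs_of_nonneg hsoft]; linarith [log_one_add_exp_le t]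

lemma ConvexOn.map_add_div_two_le {s : Set ℝ} {f : ℝ → ℝ} (hf : ConvexOn ℝ s f) {x y : ℝ}
    (hx : x ∈ s) (hy : y ∈ s) : f ((x + y) / 2) ≤ (f x + f y) / 2 := by
  have h := hf.2 hx hy (by norm_num : (0 : ℝ) ≤ 1 / 2) (by norm_num : (0 : ℝ) ≤ 1 / 2)
    (by norm_num)
  simp only [smul_eq_mul] at h
  rw [show (x + y) / 2 = 1 / 2 * x + 1 / 2 * y by ring]
  linarith

lemma StrictConvexOn.map_add_div_two_lt {s : Set ℝ} {f : ℝ → ℝ} (hf : StrictConvexOn ℝ s f)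
    {x y : ℝ} (hx : x ∈ s) (hy : y ∈ s) (hxy : x ≠ y) : f ((x + y) / 2) < (f x + f y) / 2 := by
  have h := hf.2 hx hy hxy (by norm_num : (0 : ℝ) < 1 / 2) (by norm_num : (0 : ℝ) < 1 / 2)
    (by norm_num)
  simp only [smul_eq_mul] at h
  rw [show (x + y) / 2 = 1 / 2 * x + 1 / 2 * y by ring]
  linarith

section IntegralOfConvex

variable {α : Type*} [MeasurableSpace α] {μ : Measure α} {φ : α → ℝ → ℝ} {u v : α → ℝ}

theorem integral_comp_convexComb_le (hφ : ∀ a, ConvexOn ℝ univ (φ a)) {l : ℝ}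
    (hl : l ∈ Icc (0 : ℝ) 1) (hu : Integrable (fun a => φ a (u a)) μ)
    (hv : Integrable (fun a => φ a (v a)) μ)
    (huv : Integrable (fun a => φ a ((1 - l) * u a + l * v a)) μ) :
    ∫ a, φ a ((1 - l) * u a + l * v a) ∂μ
      ≤ (1 - l) * ∫ a, φ a (u a) ∂μ + l * ∫ a, φ a (v a) ∂μ := by
  rw [← integral_const_mul, ← integral_const_mul,
    ← integral_add (hu.const_mul _) (hv.const_mul _)]
  exact integral_mono huv ((hu.const_mul _).add (hv.const_mul _)) fun a =>
    (hφ a).2 (mem_univ _) (mem_univ _) (sub_nonneg.2 hl.2) hl.1 (sub_add_cancel 1 l)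

theorem integral_comp_add_div_two_lt (hφ : ∀ a, StrictConvexOn ℝ univ (φ a))
    (hu : Integrable (fun a => φ a (u a)) μ) (hv : Integrable (fun a => φ a (v a)) μ)
    (huv : Integrable (fun a => φ a ((u a + v a) / 2)) μ) (hne : 0 < μ {a | u a ≠ v a}) :
    ∫ a, φ a ((u a + v a) / 2) ∂μ < (∫ a, φ a (u a) ∂μ + ∫ a, φ a (v a) ∂μ) / 2 := by
  have hmean : Integrable (fun a => (φ a (u a) + φ a (v a)) / 2) μ := (hu.add hv).div_const 2
  have hgap : 0 < ∫ a, ((φ a (u a) + φ a (v a)) / 2 - φ a ((u a + v a) / 2)) ∂μ := by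
    rw [integral_pos_iff_support_of_nonneg
      (fun a => sub_nonneg.2 ((hφ a).convexOn.map_add_div_two_le (mem_univ _) (mem_univ _)))
      (hmean.sub huv)]
    exact hne.trans_le <| measure_mono fun a ha =>
      (sub_pos.2 ((hφ a).map_add_div_two_lt (mem_univ _) (mem_univ _) ha)).ne'
  rw [integral_sub hmean huv, integral_div, integral_add hu hv] at hgap
  linarith

end IntegralOfConvex

theorem exists_ae_eq_const_of_ae_prod_eq {α β : Type*} [MeasurableSpace α] {μ : Measure α}
    [SFinite μ] [NeZero μ] {d : α → β} (h : ∀ᵐ q ∂μ.prod μ, d q.2 = d q.1) :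
    ∃ c, d =ᵐ[μ] fun _ => c :=
  let ⟨x, hx⟩ := (Measure.ae_ae_of_ae_prod h).exists
  ⟨d x, hx⟩

section PopulationRisk

variable {X : Type*} [MeasurableSpace X] (F : Measure X) {δ : X → X → ℝ}

lemma measurable_prefProb [SFinite F] (hδ : Measurable fun q : X × X => δ q.1 q.2) :
    Measurable fun q : X × X => prefProb F δ q.1 q.2 := by
  have hs : MeasurableSet {r : (X × X) × X | δ r.2 r.1.2 < δ r.2 r.1.1} :=
    measurableSet_lt (hδ.comp (measurable_snd.prodMk measurable_fst.snd))
      (hδ.comp (measurable_snd.prodMk measurable_fst.fst))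
  exact (measurable_measure_prodMk_left hs).ennreal_toReal

lemma prefProb_mem_Icc [IsProbabilityMeasure F] (x y : X) : prefProb F δ x y ∈ Icc (0 : ℝ) 1 :=
  ⟨ENNReal.toReal_nonneg, ENNReal.toReal_le_of_le_ofReal zero_le_one (by simp [prob_le_one])⟩

variable [IsProbabilityMeasure F]

lemma integrable_ceLoss_prefProb (hδ : Measurable fun q : X × X => δ q.1 q.2) {θ : X → ℝ}
    (hθ : Integrable θ F) :
    Integrable (fun q : X × X => ceLoss (prefProb F δ q.1 q.2) (θ q.2 - θ q.1)) (F.prod F) := by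
  have hΔ : Integrable (fun q : X × X => θ q.2 - θ q.1) (F.prod F) :=
    (hθ.comp_snd F).sub (hθ.comp_fst F)
  refine ((integrable_const (log 2)).add (hΔ.abs.const_mul 2)).mono' ?_
    (ae_of_all _ fun q => abs_ceLoss_le (prefProb_mem_Icc F q.1 q.2) _)
  exact continuous_ceLoss.comp_aestronglyMeasurable₂
    (measurable_prefProb F hδ).aestronglyMeasurable hΔ.1

lemma popRisk_convexComb_le (hδ : Measurable fun q : X × X => δ q.1 q.2) {θ₀ θ₁ : X → ℝ}
    (h₀ : Integrable θ₀ F) (h₁ : Integrable θ₁ F) {l : ℝ} (hl : l ∈ Icc (0 : ℝ) 1) :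
    popRisk F δ (fun x => (1 - l) * θ₀ x + l * θ₁ x)
      ≤ (1 - l) * popRisk F δ θ₀ + l * popRisk F δ θ₁ := by
  have hincr : ∀ q : X × X, (1 - l) * θ₀ q.2 + l * θ₁ q.2 - ((1 - l) * θ₀ q.1 + l * θ₁ q.1)
      = (1 - l) * (θ₀ q.2 - θ₀ q.1) + l * (θ₁ q.2 - θ₁ q.1) := fun q => by ring
  have hint := integrable_ceLoss_prefProb F hδ (θ := fun x => (1 - l) * θ₀ x + l * θ₁ x)
    ((h₀.const_mul _).add (h₁.const_mul _))
  simp only [hincr] at hint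
  simp only [popRisk, hincr]
  exact integral_comp_convexComb_le (fun q => (strictConvexOn_ceLoss _).convexOn) hl
    (integrable_ceLoss_prefProb F hδ h₀) (integrable_ceLoss_prefProb F hδ h₁) hint

lemma popRisk_add_div_two_lt (hδ : Measurable fun q : X × X => δ q.1 q.2) {θ₀ θ₁ : X → ℝ}
    (h₀ : Integrable θ₀ F) (h₁ : Integrable θ₁ F)
    (hne : 0 < F.prod F {q | θ₀ q.2 - θ₀ q.1 ≠ θ₁ q.2 - θ₁ q.1}) :
    popRisk F δ (fun x => (θ₀ x + θ₁ x) / 2) < (popRisk F δ θ₀ + popRisk F δ θ₁) / 2 := by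
  have hincr : ∀ q : X × X, (θ₀ q.2 + θ₁ q.2) / 2 - (θ₀ q.1 + θ₁ q.1) / 2
      = ((θ₀ q.2 - θ₀ q.1) + (θ₁ q.2 - θ₁ q.1)) / 2 := fun q => by ring
  have hint := integrable_ceLoss_prefProb F hδ (θ := fun x => (θ₀ x + θ₁ x) / 2)
    ((h₀.add h₁).div_const 2)
  simp only [hincr] at hint
  simp only [popRisk, hincr]
  exact integral_comp_add_div_two_lt (fun q => strictConvexOn_ceLoss _)
    (integrable_ceLoss_prefProb F hδ h₀) (integrable_ceLoss_prefProb F hδ h₁) hint hne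

lemma measure_prod_increment_ne_pos {θ₀ θ₁ : X → ℝ} (h₀ : Integrable θ₀ F)
    (h₁ : Integrable θ₁ F) (hmean : ∫ x, θ₀ x ∂F = ∫ x, θ₁ x ∂F)
    (hne : 0 < F {x | θ₀ x ≠ θ₁ x}) :
    0 < F.prod F {q | θ₀ q.2 - θ₀ q.1 ≠ θ₁ q.2 - θ₁ q.1} := by
  refine pos_iff_ne_zero.2 fun hnull => hne.ne' ?_
  have hconst : ∀ᵐ q ∂F.prod F, θ₁ q.2 - θ₀ q.2 = θ₁ q.1 - θ₀ q.1 := by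
    refine ae_iff.2 (measure_mono_null ?_ hnull)
    intro q hq hincr
    exact hq (by linarith [show θ₀ q.2 - θ₀ q.1 = θ₁ q.2 - θ₁ q.1 from hincr])
  obtain ⟨c, hc⟩ := exists_ae_eq_const_of_ae_prod_eq (d := fun x => θ₁ x - θ₀ x) hconst
  have hc0 : c = 0 := by
    have h := integral_congr_ae hc
    simp only [integral_sub h₁ h₀, hmean, sub_self, integral_const, probReal_univ,
      one_smul] at h
    exact h.symm
  refine ae_iff.1 (hc.mono fun x hx => ?_)
  simp only [hc0, sub_eq_zero] at hx
  exact hx.symm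

end PopulationRisk

/-- the population risk `L_F` is convex on `L¹(F)`, and strictly convex
on the class of mean-zero functions in `L²(F)`. -/
theorem popRisk_convex_and_strictly_convex {X : Type*} [MeasurableSpace X]
    (F : Measure X) [IsProbabilityMeasure F]
    (δ : X → X → ℝ) (hδ : Measurable fun q : X × X => δ q.1 q.2) :
    (∀ θ₀ θ₁ : X → ℝ, Measurable θ₀ → Measurable θ₁ →
      Integrable θ₀ F → Integrable θ₁ F →
      ∀ l ∈ Set.Icc (0 : ℝ) 1,
        popRisk F δ (fun x => (1 - l) * θ₀ x + l * θ₁ x)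
          ≤ (1 - l) * popRisk F δ θ₀ + l * popRisk F δ θ₁) ∧
    (∀ θ₀ θ₁ : X → ℝ, Measurable θ₀ → Measurable θ₁ →
      MemLp θ₀ 2 F → MemLp θ₁ 2 F →
      (∫ x, θ₀ x ∂F) = 0 → (∫ x, θ₁ x ∂F) = 0 →
      0 < F {x | θ₀ x ≠ θ₁ x} →
      popRisk F δ (fun x => (θ₀ x + θ₁ x) / 2)
        < (popRisk F δ θ₀ + popRisk F δ θ₁) / 2) := by
  refine ⟨fun θ₀ θ₁ _ _ h₀ h₁ l hl => popRisk_convexComb_le F hδ h₀ h₁ hl,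
    fun θ₀ θ₁ _ _ h₀ h₁ hmean₀ hmean₁ hne => ?_⟩
  have hi₀ : Integrable θ₀ F := h₀.integrable one_le_two
  have hi₁ : Integrable θ₁ F := h₁.integrable one_le_two
  exact popRisk_add_div_two_lt F hδ hi₀ hi₁
    (measure_prod_increment_ne_pos F hi₀ hi₁ (hmean₀.trans hmean₁.symm) hne)
end

section
/- (Theorem 3, D1: invariance of the calibrated score.) Let T: 𝒳 → 𝒳' be a measurable bijection with measurable inverse, G = T#F, and suppose the preference equivariance p_G(Tx, Ty) = p_F(x, y) holds for all x, y. Let Θ₀(F) ⊂ L²(F) be a nonempty convex compact set of mean-zero functions, and set Θ₀(G) = {θ ∘ T^{−1} : θ ∈ Θ₀(F)}. If θ*_F is the unique minimizer of L_F over Θ₀(F) and θ*_G is the unique minimizer of L_G over Θ₀(G), then θ*_G ∘ T = θ*_F in L²(F); in particular the strength scores satisfy exp{θ*_G(Tx)} = exp{θ*_F(x)} for F-almost every x. -/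
open MeasureTheory

/-- The preference centrality `r_F(y) = E_{X∼F}[p_F(X,y)]`. -/
noncomputable def prefCentrality {X : Type*} [MeasurableSpace X] (F : Measure X)
    (δ : X → X → ℝ) (y : X) : ℝ :=
  ∫ x, prefProb F δ x y ∂F

/-!
Transporting scores along `T` preserves the risk: by the preference equivariance and the
change of variables `(X, Y) ↦ (T X, T Y)`, `L_G(η) = L_F(θ)` whenever `η ∘ T = θ` `F`-a.e.
Every `θ ∈ Θ₀(F)` is of this form for `η = θ ∘ T⁻¹ ∈ Θ₀(G)`, so the `θ ∈ Θ₀(F)` with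
`θ*_G ∘ T = θ` minimizes `L_F` over `Θ₀(F)`, and uniqueness of that minimizer gives `θ = θ*_F`.
-/

lemma popRisk_map_eq {X X' : Type*} [MeasurableSpace X] [MeasurableSpace X']
    (F : Measure X) [SFinite F] {T : X → X'} (hT : MeasurableEmbedding T)
    {δ : X → X → ℝ} {δ' : X' → X' → ℝ}
    (hequiv : ∀ x y : X, prefProb (F.map T) δ' (T x) (T y) = prefProb F δ x y)
    {η : X' → ℝ} {θ : X → ℝ} (h : (fun x => η (T x)) =ᵐ[F] θ) :
    popRisk (F.map T) δ' η = popRisk F δ θ := by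
  have h₁ : ∀ᵐ q ∂(F.prod F), η (T q.1) = θ q.1 := Measure.quasiMeasurePreserving_fst.ae h
  have h₂ : ∀ᵐ q ∂(F.prod F), η (T q.2) = θ q.2 := Measure.quasiMeasurePreserving_snd.ae h
  -- For an embedding the change of variables needs no measurability of the loss integrand.
  rw [popRisk, Measure.map_prod_map F F hT.measurable hT.measurable,
    (hT.prodMap hT).integral_map, popRisk]
  refine integral_congr_ae ?_
  filter_upwards [h₁, h₂] with q hq₁ hq₂
  simp only [Prod.map_fst, Prod.map_snd, hq₁, hq₂, hequiv]

lemma Lp.compMeasurePreserving_comp_ae_eq {X X' E : Type*} [MeasurableSpace X]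
    [MeasurableSpace X'] [NormedAddCommGroup E] {p : ENNReal} {F : Measure X}
    {T : X → X'} {S : X' → X} (hT : AEMeasurable T F) (hST : Function.LeftInverse S T)
    (hS : MeasurePreserving S (F.map T) F) (θ : Lp E p F) :
    (fun x => Lp.compMeasurePreserving S hS θ (T x)) =ᵐ[F] θ := by
  filter_upwards [ae_of_ae_map hT (Lp.coeFn_compMeasurePreserving θ hS)] with x hx
  rw [hx, Function.comp_apply, hST x]

theorem calibrated_score_invariance_general {X X' : Type*} [MeasurableSpace X] [MeasurableSpace X']
    (F : Measure X) [IsProbabilityMeasure F]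
    (δ : X → X → ℝ)
    (δ' : X' → X' → ℝ)
    (T : X → X') (S : X' → X) (hT : Measurable T) (hS : Measurable S)
    (hST : Function.LeftInverse S T) (hTS : Function.RightInverse S T)
    (hequiv : ∀ x y : X, prefProb (F.map T) δ' (T x) (T y) = prefProb F δ x y)
    (Θ₀F : Set (Lp ℝ 2 F))
    (Θ₀G : Set (Lp ℝ 2 (F.map T)))
    (hΘG : ∀ η : Lp ℝ 2 (F.map T), η ∈ Θ₀G ↔ ∃ θ ∈ Θ₀F, (fun x => η (T x)) =ᵐ[F] ⇑θ)
    (θF : Lp ℝ 2 F)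
    (hFuniq : ∀ θ ∈ Θ₀F, (∀ θ' ∈ Θ₀F, popRisk F δ ⇑θ ≤ popRisk F δ ⇑θ') → θ = θF)
    (θG : Lp ℝ 2 (F.map T)) (hGmem : θG ∈ Θ₀G)
    (hGmin : ∀ η ∈ Θ₀G, popRisk (F.map T) δ' ⇑θG ≤ popRisk (F.map T) δ' ⇑η) :
    (fun x => θG (T x)) =ᵐ[F] ⇑θF ∧
    ∀ᵐ x ∂F, Real.exp (θG (T x)) = Real.exp (θF x) := by
  let e : X ≃ᵐ X' := ⟨⟨T, S, hST, hTS⟩, hT, hS⟩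
  have hrisk : ∀ (η : X' → ℝ) (θ : X → ℝ), (fun x => η (T x)) =ᵐ[F] θ →
      popRisk (F.map T) δ' η = popRisk F δ θ := fun _ _ =>
    popRisk_map_eq F e.measurableEmbedding hequiv
  have hSpres : MeasurePreserving S (F.map T) F :=
    ⟨hS, by rw [Measure.map_map hS hT, hST.comp_eq_id, Measure.map_id]⟩
  obtain ⟨θ, hθ, hθG⟩ := (hΘG θG).1 hGmem
  have hθmin : ∀ θ' ∈ Θ₀F, popRisk F δ θ ≤ popRisk F δ θ' := by
    intro θ' hθ'
    have hpull := Lp.compMeasurePreserving_comp_ae_eq hT.aemeasurable hST hSpres θ'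
    calc popRisk F δ θ = popRisk (F.map T) δ' θG := (hrisk _ _ hθG).symm
      _ ≤ popRisk (F.map T) δ' (Lp.compMeasurePreserving S hSpres θ') :=
        hGmin _ ((hΘG _).2 ⟨θ', hθ', hpull⟩)
      _ = popRisk F δ θ' := hrisk _ _ hpull
  have hscore : (fun x => θG (T x)) =ᵐ[F] θF := hFuniq θ hθ hθmin ▸ hθG
  exact ⟨hscore, hscore.mono fun x hx => congrArg Real.exp hx⟩

/-- Theorem 3, D1: invariance of the calibrated score. Under a
measurable bijection `T` with `G = T#F` and preference equivariance
`p_G(Tx,Ty) = p_F(x,y)`, if `Θ₀(G) = {θ ∘ T⁻¹ : θ ∈ Θ₀(F)}` and `θ*_F`, `θ*_G`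
are the unique minimizers of `L_F` over `Θ₀(F)` and of `L_G` over `Θ₀(G)`,
then `θ*_G ∘ T = θ*_F` in `L²(F)`; in particular the strength scores satisfy
`exp{θ*_G(Tx)} = exp{θ*_F(x)}` for `F`-almost every `x`. -/
theorem calibrated_score_invariance {X X' : Type*} [MeasurableSpace X] [MeasurableSpace X']
    (F : Measure X) [IsProbabilityMeasure F]
    (δ : X → X → ℝ) (hδ : Measurable fun q : X × X => δ q.1 q.2)
    (δ' : X' → X' → ℝ) (hδ' : Measurable fun q : X' × X' => δ' q.1 q.2)
    (T : X → X') (S : X' → X) (hT : Measurable T) (hS : Measurable S)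
    (hST : Function.LeftInverse S T) (hTS : Function.RightInverse S T)
    (hequiv : ∀ x y : X, prefProb (F.map T) δ' (T x) (T y) = prefProb F δ x y)
    (Θ₀F : Set (Lp ℝ 2 F)) (hne : Θ₀F.Nonempty) (hconv : Convex ℝ Θ₀F)
    (hcomp : IsCompact Θ₀F) (hmean : ∀ θ ∈ Θ₀F, (∫ x, θ x ∂F) = 0)
    (Θ₀G : Set (Lp ℝ 2 (F.map T)))
    (hΘG : ∀ η : Lp ℝ 2 (F.map T), η ∈ Θ₀G ↔ ∃ θ ∈ Θ₀F, (fun x => η (T x)) =ᵐ[F] ⇑θ)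
    (θF : Lp ℝ 2 F) (hFmem : θF ∈ Θ₀F)
    (hFmin : ∀ θ ∈ Θ₀F, popRisk F δ ⇑θF ≤ popRisk F δ ⇑θ)
    (hFuniq : ∀ θ ∈ Θ₀F, (∀ θ' ∈ Θ₀F, popRisk F δ ⇑θ ≤ popRisk F δ ⇑θ') → θ = θF)
    (θG : Lp ℝ 2 (F.map T)) (hGmem : θG ∈ Θ₀G)
    (hGmin : ∀ η ∈ Θ₀G, popRisk (F.map T) δ' ⇑θG ≤ popRisk (F.map T) δ' ⇑η)
    (hGuniq : ∀ η ∈ Θ₀G,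
      (∀ η' ∈ Θ₀G, popRisk (F.map T) δ' ⇑η ≤ popRisk (F.map T) δ' ⇑η') → η = θG) :
    (fun x => θG (T x)) =ᵐ[F] ⇑θF ∧
    ∀ᵐ x ∂F, Real.exp (θG (T x)) = Real.exp (θF x) :=
  calibrated_score_invariance_general F δ δ' T S hT hS hST hTS hequiv Θ₀F Θ₀G hΘG θF hFuniq θG hGmem
    hGmin
end

section
/- (Proposition 1: one-dimensional center-outward ordering.) Let F be a probability measure on ℝ, δ(x,y) = |x − y|, and suppose X − μ and μ − X have the same distribution for X ∼ F. Assume additionally the interpolation property r_F((1−α)μ + αx) ≥ r_F(x) for all x ∈ ℝ and α ∈ [0,1]. Then r_F depends only on the distance to μ and is monotone in it: whenever |x − μ| ≤ |y − μ| one has r_F(x) ≥ r_F(y). Consequently, if θ*: ℝ → ℝ satisfies H(θ*(y)) = r_F(y) for all y with H strictly increasing, then |x − μ| ≤ |y − μ| implies θ*(x) ≥ θ*(y), and there exists a non-increasing φ: [0,∞) → ℝ with θ*(x) = φ(|x − μ|) for all x. -/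
open MeasureTheory

/-- Proposition 1: one-dimensional center-outward ordering: if `F`
on `ℝ` is symmetric about `μ` and `r_F` satisfies the interpolation property
`r_F((1-α)μ + αx) ≥ r_F(x)`, then `|x-μ| ≤ |y-μ|` implies `r_F(x) ≥ r_F(y)`;
consequently, for any strictly increasing `H` and any `θ*` with
`H(θ*(y)) = r_F(y)` for all `y`, `|x-μ| ≤ |y-μ|` implies `θ*(x) ≥ θ*(y)`, and
`θ*(x) = φ(|x-μ|)` for some non-increasing `φ : [0,∞) → ℝ`. -/
theorem center_outward_ordering_1d (F : Measure ℝ) [IsProbabilityMeasure F] (μ : ℝ)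
    (hsym : F.map (fun x => x - μ) = F.map (fun x => μ - x))
    (hinterp : ∀ x : ℝ, ∀ α ∈ Set.Icc (0 : ℝ) 1,
      prefCentrality F (fun a b => |a - b|) x
        ≤ prefCentrality F (fun a b => |a - b|) ((1 - α) * μ + α * x))
    (θs H : ℝ → ℝ) (hH : StrictMono H)
    (hcal : ∀ y : ℝ, H (θs y) = prefCentrality F (fun a b => |a - b|) y) :
    (∀ x y : ℝ, |x - μ| ≤ |y - μ| →
      prefCentrality F (fun a b => |a - b|) y ≤ prefCentrality F (fun a b => |a - b|) x) ∧
    (∀ x y : ℝ, |x - μ| ≤ |y - μ| → θs y ≤ θs x) ∧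
    (∃ φ : ℝ → ℝ, AntitoneOn φ (Set.Ici 0) ∧ ∀ x : ℝ, θs x = φ |x - μ|) := by
  classical
  set δ : ℝ → ℝ → ℝ := fun a b => |a - b| with hδ
  set r : ℝ → ℝ := prefCentrality F δ with hr
  set s : ℝ → ℝ := fun z => 2*μ - z with hs
  have hsmeas : Measurable s := by fun_prop
  have hmap : F.map s = F := by
    have h1 := congrArg (Measure.map (fun t : ℝ => t + μ)) hsym
    rw [Measure.map_map (by fun_prop) (by fun_prop),
        Measure.map_map (by fun_prop) (by fun_prop)] at h1
    have e1 : ((fun t : ℝ => t + μ) ∘ (fun x => x - μ)) = id := by funext t; simp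
    have e2 : ((fun t : ℝ => t + μ) ∘ (fun x => μ - x)) = s := by
      funext t; simp only [hs, Function.comp]; ring
    rw [e1, e2, Measure.map_id] at h1
    exact h1.symm
  have habs : ∀ z w : ℝ, |s z - s w| = |z - w| := by
    intro z w
    rw [show s z - s w = -(z - w) by simp only [hs]; ring, abs_neg]
  have hpref : ∀ x y : ℝ, prefProb F δ (s x) (s y) = prefProb F δ x y := by
    intro x y
    unfold prefProb
    congr 1
    have hms : MeasurableSet {z : ℝ | δ z (s y) < δ z (s x)} := by
      apply measurableSet_lt
      · simp only [hδ]; fun_prop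
      · simp only [hδ]; fun_prop
    calc F {z | δ z (s y) < δ z (s x)}
        = F.map s {z | δ z (s y) < δ z (s x)} := by rw [hmap]
      _ = F (s ⁻¹' {z | δ z (s y) < δ z (s x)}) := Measure.map_apply hsmeas hms
      _ = F {z | δ z y < δ z x} := by
          congr 1
          ext z
          simp only [Set.mem_preimage, Set.mem_setOf_eq, hδ, habs]
  have hss : ∀ x : ℝ, s (s x) = x := by intro x; simp only [hs]; ring
  have hmeasInt : ∀ y : ℝ, Measurable fun x => prefProb F δ x y := by
    intro y
    have hset : MeasurableSet {p : ℝ × ℝ | δ p.2 y < δ p.2 p.1} := by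
      apply measurableSet_lt
      · simp only [hδ]; fun_prop
      · simp only [hδ]; fun_prop
    have h1 := measurable_measure_prodMk_left (ν := F) hset
    have h2 : (fun x => prefProb F δ x y)
        = fun x => (F (Prod.mk x ⁻¹' {p : ℝ × ℝ | δ p.2 y < δ p.2 p.1})).toReal := by
      funext x
      rfl
    rw [h2]
    exact ENNReal.measurable_toReal.comp h1
  have hrsym : ∀ y : ℝ, r (s y) = r y := by
    intro y
    have h1 : ∀ x, prefProb F δ x (s y) = prefProb F δ (s x) y := by
      intro x
      have h := hpref (s x) y
      rw [hss x] at h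
      exact h
    calc r (s y) = ∫ x, prefProb F δ x (s y) ∂F := rfl
      _ = ∫ x, prefProb F δ (s x) y ∂F := by simp only [h1]
      _ = ∫ x, prefProb F δ x y ∂(F.map s) :=
          (integral_map hsmeas.aemeasurable ((hmeasInt y).aestronglyMeasurable)).symm
      _ = r y := by rw [hmap]; rfl
  have hcanon : ∀ x : ℝ, r (μ + |x - μ|) = r x := by
    intro x
    rcases le_or_gt μ x with h | h
    · have : μ + |x - μ| = x := by
        rw [abs_of_nonneg (by linarith : (0:ℝ) ≤ x - μ)]; ring
      rw [this]
    · have : μ + |x - μ| = s x := by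
        rw [abs_of_neg (by linarith : x - μ < 0)]; simp only [hs]; ring
      rw [this, hrsym]
  have hmono : ∀ x y : ℝ, |x - μ| ≤ |y - μ| → r y ≤ r x := by
    intro x y hle
    rw [← hcanon x, ← hcanon y]
    have ha : 0 ≤ |x - μ| := abs_nonneg _
    have hb : 0 ≤ |y - μ| := abs_nonneg _
    set a := |x - μ|
    set b := |y - μ|
    rcases eq_or_lt_of_le hb with hb0 | hb0
    · have haz : a = 0 := le_antisymm (hb0 ▸ hle) ha
      rw [haz, ← hb0]
    · have hα : a / b ∈ Set.Icc (0:ℝ) 1 :=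
        ⟨div_nonneg ha hb, (div_le_one hb0).mpr hle⟩
      have h := hinterp (μ + b) (a / b) hα
      have he : (1 - a/b) * μ + (a/b) * (μ + b) = μ + a := by
        field_simp
        ring
      rw [he] at h
      exact h
  have hθmono : ∀ x y : ℝ, |x - μ| ≤ |y - μ| → θs y ≤ θs x := by
    intro x y h
    have := hmono x y h
    rw [← hcal, ← hcal] at this
    exact hH.le_iff_le.mp this
  refine ⟨hmono, hθmono, ⟨fun t => θs (μ + t), ?_, ?_⟩⟩
  · intro t1 ht1 t2 ht2 hle
    apply hθmono
    rw [show μ + t1 - μ = t1 by ring, show μ + t2 - μ = t2 by ring,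
        abs_of_nonneg ht1, abs_of_nonneg ht2]
    exact hle
  · intro x
    have hax : |μ + |x - μ| - μ| = |x - μ| := by
      rw [show μ + |x - μ| - μ = |x - μ| by ring, abs_abs]
    apply le_antisymm
    · exact hθmono _ _ (by rw [hax])
    · exact hθmono _ _ (by rw [hax])
end

section
/- (Proposition 2: elliptical center-outward ordering.) Let 𝒳 = ℝ^d, let Σ be a symmetric positive definite d×d matrix, and equip ℝ^d with the Mahalanobis dissimilarity δ_Σ(x,y) = {(x−y)ᵀΣ^{−1}(x−y)}^{1/2}. Suppose X ∼ F satisfies Σ^{−1/2}(X − μ) ≐ O Σ^{−1/2}(X − μ) in distribution for every orthogonal d×d matrix O. Then the preference centrality r_F (computed with δ = δ_Σ) satisfies: δ_Σ(x, μ) = δ_Σ(y, μ) implies r_F(x) = r_F(y). If in addition r_F((1−α)μ + αx) ≥ r_F(x) for all x and α ∈ [0,1], then δ_Σ(x, μ) ≤ δ_Σ(y, μ) implies r_F(x) ≥ r_F(y); hence any θ* satisfying H(θ*(y)) = r_F(y) for all y with H strictly increasing can be written as θ*(x) = φ(δ_Σ(x, μ)) for a non-increasing φ: [0,∞) → ℝ.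 -/
open MeasureTheory

open Matrix in
/-- The Mahalanobis dissimilarity `δ_Σ(x,y) = {(x-y)ᵀ Σ⁻¹ (x-y)}^{1/2}`. -/
noncomputable def mahalanobis {d : ℕ} (Sig : Matrix (Fin d) (Fin d) ℝ)
    (x y : Fin d → ℝ) : ℝ :=
  Real.sqrt ((x - y) ⬝ᵥ (Sig⁻¹ *ᵥ (x - y)))

open Matrix ComplexOrder in
/-- The positive semidefinite square root of a positive semidefinite matrix, as defined in
Mathlib (Dec 2024) under the name `Matrix.PosSemidef.sqrt` (removed since). -/
noncomputable def posSemidefSqrt {n 𝕜 : Type*} [Fintype n] [DecidableEq n] [RCLike 𝕜]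
    {A : Matrix n n 𝕜} (hA : A.PosSemidef) : Matrix n n 𝕜 :=
  hA.1.eigenvectorUnitary.1 * diagonal ((↑) ∘ (√·) ∘ hA.1.eigenvalues) *
  (star hA.1.eigenvectorUnitary : Matrix n n 𝕜)

/-! Whitening by `S = Σ^{1/2}` turns `δ_Σ(x, y)` into the Euclidean distance between
`S⁻¹(x - μ)` and `S⁻¹(y - μ)`, and the preference centrality of `F` with respect to `δ_Σ` is
that of the whitened law with respect to the Euclidean distance. The whitened law is invariant
under every orthogonal matrix, and a reflection maps any point of a sphere centred at `0` to any
other, so `r_F` is constant on Mahalanobis spheres around `μ`. The Mahalanobis radius grows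
linearly along the segment from `μ` to `y`, so that segment meets the sphere through any `x`
closer to `μ`, and the interpolation hypothesis gives `r_F(y) ≤ r_F(x)`. As the radii fill
`[0, ∞)`, `θ* = H⁻¹ ∘ r_F` factors through the radius as a non-increasing function. -/

open Matrix

section PosSemidefSqrt

open ComplexOrder

variable {n 𝕜 : Type*} [Fintype n] [DecidableEq n] [RCLike 𝕜] {A : Matrix n n 𝕜}

theorem posSemidefSqrt_mul_self (hA : A.PosSemidef) :
    posSemidefSqrt hA * posSemidefSqrt hA = A := by
  have hUU : (star hA.1.eigenvectorUnitary : Matrix n n 𝕜) * hA.1.eigenvectorUnitary.1 = 1 :=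
    Unitary.coe_star_mul_self _
  unfold posSemidefSqrt
  conv_rhs => rw [hA.1.spectral_theorem, Unitary.conjStarAlgAut_apply]
  simp only [mul_assoc]
  rw [← mul_assoc (star hA.1.eigenvectorUnitary : Matrix n n 𝕜) _ _, hUU, one_mul,
    ← mul_assoc (diagonal _), diagonal_mul_diagonal]
  congr 3
  funext i
  simp only [Function.comp_apply]
  rw [← RCLike.ofReal_mul, Real.mul_self_sqrt (hA.eigenvalues_nonneg i)]

theorem posSemidefSqrt_conjTranspose (hA : A.PosSemidef) :
    (posSemidefSqrt hA)ᴴ = posSemidefSqrt hA := by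
  unfold posSemidefSqrt
  rw [conjTranspose_mul, conjTranspose_mul, diagonal_conjTranspose, mul_assoc]
  congr 2
  · simp [star_eq_conjTranspose]
  · ext i j
    simp [diagonal_apply]

end PosSemidefSqrt

theorem Matrix.exists_mul_transpose_eq_one_mulVec_eq {n : Type*} [Fintype n] [DecidableEq n]
    {v w : n → ℝ} (h : v ⬝ᵥ v = w ⬝ᵥ w) : ∃ O : Matrix n n ℝ, O * Oᵀ = 1 ∧ O *ᵥ v = w := by
  let b := EuclideanSpace.basisFun n ℝ
  have hnorm : ‖WithLp.toLp 2 v‖ = ‖WithLp.toLp 2 w‖ := by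
    simp only [norm_eq_sqrt_real_inner, EuclideanSpace.inner_eq_star_dotProduct]
    simp [h]
  let R := Submodule.reflection (ℝ ∙ (WithLp.toLp 2 v - WithLp.toLp 2 w))ᗮ
  refine ⟨R.toMatrix b.toBasis b.toBasis, ?_, ?_⟩
  · simpa [mem_unitaryGroup_iff, star_eq_conjTranspose] using R.toMatrix_mem_unitaryGroup b b
  · have h := LinearMap.toMatrix_mulVec_repr b.toBasis b.toBasis R.toLinearMap (WithLp.toLp 2 v)
    rwa [LinearEquiv.coe_coe, LinearIsometryEquiv.coe_toLinearEquiv,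
      Submodule.reflection_sub hnorm] at h

section Mahalanobis

variable {d : ℕ}

theorem mahalanobis_nonneg (Sig : Matrix (Fin d) (Fin d) ℝ) (x y : Fin d → ℝ) :
    0 ≤ mahalanobis Sig x y :=
  Real.sqrt_nonneg _

theorem mahalanobis_pos {Sig : Matrix (Fin d) (Fin d) ℝ} (hSig : Sig.PosDef) {x y : Fin d → ℝ}
    (h : x ≠ y) : 0 < mahalanobis Sig x y :=
  Real.sqrt_pos.mpr (by simpa using hSig.inv.dotProduct_mulVec_pos (sub_ne_zero.mpr h))

theorem mahalanobis_one_sub_smul_add_smul (Sig : Matrix (Fin d) (Fin d) ℝ) (μ x : Fin d → ℝ)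
    {α : ℝ} (hα : 0 ≤ α) : mahalanobis Sig ((1 - α) • μ + α • x) μ = α * mahalanobis Sig x μ := by
  have hsub : (1 - α) • μ + α • x - μ = α • (x - μ) := by module
  rw [mahalanobis, mahalanobis, hsub, mulVec_smul, dotProduct_smul, smul_dotProduct,
    smul_eq_mul, smul_eq_mul, ← mul_assoc, Real.sqrt_mul (mul_self_nonneg α),
    Real.sqrt_mul_self hα]

theorem mahalanobis_one_eq_sqrt (u v : Fin d → ℝ) :
    mahalanobis 1 u v = Real.sqrt ((u - v) ⬝ᵥ (u - v)) := by
  rw [mahalanobis, inv_one, one_mulVec]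

theorem continuous_mahalanobis_one :
    Continuous fun p : (Fin d → ℝ) × (Fin d → ℝ) => mahalanobis 1 p.1 p.2 := by
  simp only [mahalanobis_one_eq_sqrt]
  fun_prop

theorem mahalanobis_one_mulVec {O : Matrix (Fin d) (Fin d) ℝ} (hO : O * Oᵀ = 1)
    (u v : Fin d → ℝ) : mahalanobis 1 (O *ᵥ u) (O *ᵥ v) = mahalanobis 1 u v := by
  rw [mahalanobis_one_eq_sqrt, mahalanobis_one_eq_sqrt, ← mulVec_sub, dotProduct_mulVec,
    vecMul_mulVec, mul_eq_one_comm.mp hO, vecMul_one]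

theorem mahalanobis_mul_self {S : Matrix (Fin d) (Fin d) ℝ} (hS : Sᵀ = S) (μ x y : Fin d → ℝ) :
    mahalanobis (S * S) x y = mahalanobis 1 (S⁻¹ *ᵥ (x - μ)) (S⁻¹ *ᵥ (y - μ)) := by
  rw [mahalanobis_one_eq_sqrt, ← mulVec_sub, sub_sub_sub_cancel_right, mahalanobis,
    Matrix.mul_inv_rev, ← mulVec_mulVec, dotProduct_mulVec, ← mulVec_transpose,
    transpose_nonsing_inv, hS]

end Mahalanobis

section PrefCentrality

variable {X Y : Type*} [MeasurableSpace X] [MeasurableSpace Y]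

theorem prefCentrality_map {F : Measure X} [SFinite F] {T : X → Y} (hT : Measurable T)
    {δ : Y → Y → ℝ} (hδ : Measurable (Function.uncurry δ)) (y : X) :
    prefCentrality (F.map T) δ (T y) = prefCentrality F (fun a b => δ (T a) (T b)) y := by
  have hset : MeasurableSet {p : Y × Y | δ p.2 (T y) < δ p.2 p.1} :=
    measurableSet_lt (hδ.comp (measurable_snd.prodMk measurable_const))
      (hδ.comp (measurable_snd.prodMk measurable_fst))
  have hprob : Measurable fun u => prefProb (F.map T) δ u (T y) :=
    (measurable_measure_prodMk_left hset).ennreal_toReal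
  rw [prefCentrality, prefCentrality, integral_map hT.aemeasurable hprob.aestronglyMeasurable]
  congr 1 with x
  have hslice : MeasurableSet {w | δ w (T y) < δ w (T x)} := measurable_prodMk_left hset
  rw [prefProb, prefProb, Measure.map_apply hT hslice]
  rfl

theorem MeasureTheory.MeasurePreserving.prefCentrality_apply {G : Measure Y} [SFinite G]
    {g : Y → Y} (hg : MeasurePreserving g G G) {δ : Y → Y → ℝ}
    (hδ : Measurable (Function.uncurry δ)) (hiso : ∀ a b, δ (g a) (g b) = δ a b) (y : Y) :
    prefCentrality G δ (g y) = prefCentrality G δ y := by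
  conv_lhs => rw [← hg.map_eq, prefCentrality_map hg.measurable hδ]
  simp only [hiso]

end PrefCentrality

theorem prefCentrality_eq_of_mahalanobis_eq {d : ℕ} {Sig S : Matrix (Fin d) (Fin d) ℝ}
    (hS : Sᵀ = S) (hSS : S * S = Sig) {F : Measure (Fin d → ℝ)} [SFinite F] {μ : Fin d → ℝ}
    (hell : ∀ O : Matrix (Fin d) (Fin d) ℝ, O * Oᵀ = 1 →
      F.map (fun x => S⁻¹ *ᵥ (x - μ)) = F.map (fun x => O *ᵥ (S⁻¹ *ᵥ (x - μ))))
    (x y : Fin d → ℝ) (h : mahalanobis Sig x μ = mahalanobis Sig y μ) :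
    prefCentrality F (mahalanobis Sig) x = prefCentrality F (mahalanobis Sig) y := by
  subst hSS
  set T : (Fin d → ℝ) → Fin d → ℝ := fun x => S⁻¹ *ᵥ (x - μ)
  have hT : Measurable T := by fun_prop
  have hδ : Measurable (Function.uncurry (mahalanobis (d := d) 1)) :=
    continuous_mahalanobis_one.measurable
  have hwhite : mahalanobis (S * S) = fun a b => mahalanobis 1 (T a) (T b) :=
    funext₂ (mahalanobis_mul_self hS μ)
  have hdot : T x ⬝ᵥ T x = T y ⬝ᵥ T y := by
    have hnonneg (v : Fin d → ℝ) : 0 ≤ v ⬝ᵥ v := by simpa using dotProduct_star_self_nonneg v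
    simpa [hwhite, T, mahalanobis_one_eq_sqrt, Real.sqrt_inj (hnonneg _) (hnonneg _)] using h
  obtain ⟨O, hO, hOx⟩ := exists_mul_transpose_eq_one_mulVec_eq hdot
  have hOF : MeasurePreserving (O *ᵥ ·) (F.map T) (F.map T) :=
    ⟨by fun_prop, by rw [Measure.map_map (by fun_prop) hT]; exact (hell O hO).symm⟩
  rw [hwhite, ← prefCentrality_map hT hδ, ← prefCentrality_map hT hδ, ← hOx,
    hOF.prefCentrality_apply hδ (mahalanobis_one_mulVec hO)]

theorem le_of_mahalanobis_le {d : ℕ} {Sig : Matrix (Fin d) (Fin d) ℝ} {μ : Fin d → ℝ}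
    {f : (Fin d → ℝ) → ℝ}
    (hsphere : ∀ x y, mahalanobis Sig x μ = mahalanobis Sig y μ → f x = f y)
    (hsegment : ∀ x, ∀ α ∈ Set.Icc (0 : ℝ) 1, f x ≤ f ((1 - α) • μ + α • x))
    (x y : Fin d → ℝ) (hxy : mahalanobis Sig x μ ≤ mahalanobis Sig y μ) : f y ≤ f x := by
  rcases (mahalanobis_nonneg Sig y μ).eq_or_lt with hy | hy
  · exact (hsphere x y (le_antisymm (hy ▸ hxy) (hy ▸ mahalanobis_nonneg Sig x μ))).ge
  set α := mahalanobis Sig x μ / mahalanobis Sig y μ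
  have hα : α ∈ Set.Icc (0 : ℝ) 1 :=
    ⟨div_nonneg (mahalanobis_nonneg Sig x μ) hy.le, div_le_one_of_le₀ hxy hy.le⟩
  have hz : mahalanobis Sig x μ = mahalanobis Sig ((1 - α) • μ + α • y) μ := by
    rw [mahalanobis_one_sub_smul_add_smul Sig μ y hα.1, div_mul_cancel₀ _ hy.ne']
  exact (hsegment y α hα).trans (hsphere x _ hz).ge

theorem exists_antitoneOn_eq_comp {X : Type*} {ρ f : X → ℝ} (hρ : Set.Ici 0 ⊆ Set.range ρ)
    (hf : ∀ x y, ρ x ≤ ρ y → f y ≤ f x) :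
    ∃ φ : ℝ → ℝ, AntitoneOn φ (Set.Ici 0) ∧ ∀ x, f x = φ (ρ x) := by
  obtain ⟨x₀, -⟩ := hρ Set.self_mem_Ici
  have : Nonempty X := ⟨x₀⟩
  have hinv {t : ℝ} (ht : t ∈ Set.range ρ) : ρ (Function.invFun ρ t) = t :=
    Function.invFun_eq ht
  refine ⟨f ∘ Function.invFun ρ, fun a ha b hb hab => hf _ _ ?_, fun x => ?_⟩
  · rwa [hinv (hρ ha), hinv (hρ hb)]
  · have hx := hinv (Set.mem_range_self x)
    exact le_antisymm (hf _ _ hx.le) (hf _ _ hx.ge)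

theorem Ici_subset_range_mahalanobis {d : ℕ} [Nontrivial (Fin d → ℝ)]
    {Sig : Matrix (Fin d) (Fin d) ℝ} (hSig : Sig.PosDef) (μ : Fin d → ℝ) :
    Set.Ici 0 ⊆ Set.range (mahalanobis Sig · μ) := by
  obtain ⟨x, hx⟩ := exists_ne μ
  have hr := mahalanobis_pos hSig hx
  intro t ht
  refine ⟨(1 - t / mahalanobis Sig x μ) • μ + (t / mahalanobis Sig x μ) • x, ?_⟩
  dsimp only
  rw [mahalanobis_one_sub_smul_add_smul Sig μ x (div_nonneg ht hr.le), div_mul_cancel₀ _ hr.ne']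

theorem exists_antitoneOn_eq_comp_mahalanobis {d : ℕ} {Sig : Matrix (Fin d) (Fin d) ℝ}
    (hSig : Sig.PosDef) (μ : Fin d → ℝ) {f : (Fin d → ℝ) → ℝ}
    (hf : ∀ x y, mahalanobis Sig x μ ≤ mahalanobis Sig y μ → f y ≤ f x) :
    ∃ φ : ℝ → ℝ, AntitoneOn φ (Set.Ici 0) ∧ ∀ x, f x = φ (mahalanobis Sig x μ) := by
  rcases subsingleton_or_nontrivial (Fin d → ℝ) with _ | _
  · exact ⟨fun _ => f μ, antitoneOn_const, fun x => congrArg f (Subsingleton.elim x μ)⟩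
  · exact exists_antitoneOn_eq_comp (Ici_subset_range_mahalanobis hSig μ) hf

open Matrix in
/-- Proposition 2: elliptical center-outward ordering: if `F` on
`ℝ^d` is elliptically symmetric about `μ` with scatter `Σ` (i.e. `Σ^{-1/2}(X-μ)`
is distributionally invariant under every orthogonal `O`), then the preference
centrality `r_F` computed with `δ_Σ` is constant on Mahalanobis spheres around
`μ`; if moreover the interpolation property holds, `r_F` is monotone in the
Mahalanobis radius, and any calibrated `θ*` with `H(θ*(y)) = r_F(y)` (`H`
strictly increasing) is a non-increasing function of `δ_Σ(·, μ)`. -/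
theorem elliptical_center_outward_ordering {d : ℕ}
    (Sig : Matrix (Fin d) (Fin d) ℝ) (hSig : Sig.PosDef)
    (F : Measure (Fin d → ℝ)) [IsProbabilityMeasure F] (μ : Fin d → ℝ)
    (hell : ∀ O : Matrix (Fin d) (Fin d) ℝ, O * Oᵀ = 1 →
      F.map (fun x => (posSemidefSqrt hSig.posSemidef)⁻¹ *ᵥ (x - μ))
        = F.map (fun x => O *ᵥ ((posSemidefSqrt hSig.posSemidef)⁻¹ *ᵥ (x - μ)))) :
    (∀ x y : Fin d → ℝ, mahalanobis Sig x μ = mahalanobis Sig y μ →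
      prefCentrality F (mahalanobis Sig) x = prefCentrality F (mahalanobis Sig) y) ∧
    ((∀ x : Fin d → ℝ, ∀ α ∈ Set.Icc (0 : ℝ) 1,
        prefCentrality F (mahalanobis Sig) x
          ≤ prefCentrality F (mahalanobis Sig) ((1 - α) • μ + α • x)) →
      (∀ x y : Fin d → ℝ, mahalanobis Sig x μ ≤ mahalanobis Sig y μ →
        prefCentrality F (mahalanobis Sig) y ≤ prefCentrality F (mahalanobis Sig) x) ∧
      (∀ (H : ℝ → ℝ) (θs : (Fin d → ℝ) → ℝ), StrictMono H →
        (∀ y : Fin d → ℝ, H (θs y) = prefCentrality F (mahalanobis Sig) y) →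
        ∃ φ : ℝ → ℝ, AntitoneOn φ (Set.Ici 0) ∧
          ∀ x : Fin d → ℝ, θs x = φ (mahalanobis Sig x μ))) := by
  have hS : (posSemidefSqrt hSig.posSemidef)ᵀ = posSemidefSqrt hSig.posSemidef := by
    simpa using posSemidefSqrt_conjTranspose hSig.posSemidef
  have hsphere := prefCentrality_eq_of_mahalanobis_eq hS (posSemidefSqrt_mul_self _) hell
  refine ⟨hsphere, fun hsegment => ?_⟩
  have hmono := le_of_mahalanobis_le hsphere hsegment
  refine ⟨hmono, fun H θs hH hθs =>
    exists_antitoneOn_eq_comp_mahalanobis hSig μ fun x y hxy => ?_⟩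
  rw [← hH.le_iff_le, hθs, hθs]
  exact hmono x y hxy
end

section
/- (Existence and uniqueness of the empirical M-estimator.) Let n ≥ 2 and let (p̂_ij)_{1≤i<j≤n} satisfy p̂_ij ∈ (0,1) for all i < j. Then the empirical objective 𝓛_n is convex on ℝⁿ and attains a unique minimizer over the centered hyperplane {θ ∈ ℝⁿ : θ₁ + ⋯ + θ_n = 0}. Moreover, if p̂_ij = σ(u_j − u_i) for some u ∈ ℝⁿ with u₁ + ⋯ + u_n = 0, then this unique minimizer equals u. -/
/-- The empirical objective
`𝓛_n(θ) = Σ_{i<j} [-p̂_ij log σ(θ_j - θ_i) - (1 - p̂_ij) log σ(θ_i - θ_j)]`. -/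
noncomputable def empObjective {n : ℕ} (phat : Fin n → Fin n → ℝ) (θ : Fin n → ℝ) : ℝ :=
  ∑ i : Fin n, ∑ j : Fin n,
    if i < j then
      -phat i j * Real.log (logistic (θ j - θ i))
        - (1 - phat i j) * Real.log (logistic (θ i - θ j))
    else 0

open Real Set Filter Topology

lemma logistic_eq_sigmoid : logistic = sigmoid := by
  ext t
  rw [logistic, sigmoid_def, one_div]

noncomputable def softplus (t : ℝ) : ℝ := log (1 + exp t)

lemma one_add_exp_pos (t : ℝ) : 0 < 1 + exp t := by positivity

lemma softplus_nonneg (t : ℝ) : 0 ≤ softplus t :=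
  log_nonneg (le_add_of_nonneg_right (exp_pos t).le)

lemma le_softplus (t : ℝ) : t ≤ softplus t := by
  calc t = log (exp t) := (log_exp t).symm
    _ ≤ softplus t := log_le_log (exp_pos t) (by linarith)

lemma softplus_neg (t : ℝ) : softplus (-t) = softplus t - t := by
  have h : 1 + exp (-t) = exp (-t) * (1 + exp t) := by
    rw [mul_add, mul_one, ← exp_add, neg_add_cancel, exp_zero, add_comm]
  rw [softplus, softplus, h, log_mul (exp_ne_zero _) (one_add_exp_pos t).ne', log_exp]
  ring

lemma neg_log_logistic (t : ℝ) : -log (logistic t) = softplus (-t) := by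
  rw [logistic, one_div, log_inv, neg_neg, softplus]

lemma hasDerivAt_softplus (t : ℝ) : HasDerivAt softplus (sigmoid t) t := by
  refine (((hasDerivAt_exp t).const_add 1).log (one_add_exp_pos t).ne').congr_deriv ?_
  rw [sigmoid_def, exp_neg]
  field_simp
  ring

lemma strictConvexOn_softplus : StrictConvexOn ℝ univ softplus := by
  have hderiv : deriv softplus = sigmoid := funext fun t => (hasDerivAt_softplus t).deriv
  refine StrictMono.strictConvexOn_univ_of_deriv ?_ (hderiv ▸ sigmoid_strictMono)
  exact continuous_iff_continuousAt.2 fun t => (hasDerivAt_softplus t).continuousAt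

noncomputable def pairLoss (p d : ℝ) : ℝ := softplus d - p * d

lemma strictConvexOn_pairLoss (p : ℝ) : StrictConvexOn ℝ univ (pairLoss p) :=
  strictConvexOn_softplus.sub_concaveOn ((LinearMap.mul ℝ ℝ p).concaveOn convex_univ)

lemma hasDerivAt_pairLoss (p d : ℝ) : HasDerivAt (pairLoss p) (sigmoid d - p) d :=
  ((hasDerivAt_softplus d).fun_sub ((hasDerivAt_id' d).const_mul p)).congr_deriv (by ring)

lemma isMinOn_pairLoss_sigmoid (c : ℝ) : IsMinOn (pairLoss (sigmoid c)) univ c := by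
  have hderiv (d : ℝ) : deriv (pairLoss (sigmoid c)) d = sigmoid d - sigmoid c :=
    (hasDerivAt_pairLoss _ d).deriv
  have hdiff (s : Set ℝ) : DifferentiableOn ℝ (pairLoss (sigmoid c)) s :=
    fun d _ => (hasDerivAt_pairLoss _ d).differentiableAt.differentiableWithinAt
  refine isMinOn_univ_of_deriv (hasDerivAt_pairLoss _ c).continuousAt (hdiff _) (hdiff _)
    (fun d hd => ?_) (fun d hd => ?_) <;> simp only [hderiv, sub_nonpos, sub_nonneg]
  exacts [sigmoid_le hd.le, sigmoid_le hd.le]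

lemma mul_abs_le_pairLoss {m p : ℝ} (hp : m ≤ p) (hq : m ≤ 1 - p) (d : ℝ) :
    m * |d| ≤ pairLoss p d := by
  have := softplus_nonneg d
  have := le_softplus d
  rw [pairLoss]
  rcases le_total 0 d with hd | hd
  · rw [abs_of_nonneg hd]; nlinarith
  · rw [abs_of_nonpos hd]; nlinarith

lemma pairLoss_nonneg {p : ℝ} (hp : 0 ≤ p) (hq : 0 ≤ 1 - p) (d : ℝ) : 0 ≤ pairLoss p d := by
  simpa using mul_abs_le_pairLoss hp hq d

section PairwiseSum

variable {ι : Type*} {t : Finset (ι × ι)} {f : ι × ι → ℝ → ℝ}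

lemma sub_apply_add_smul (θ η : ι → ℝ) (a b : ℝ) (i j : ι) :
    (a • θ + b • η) j - (a • θ + b • η) i = a • (θ j - θ i) + b • (η j - η i) := by
  simp only [Pi.add_apply, Pi.smul_apply, smul_eq_mul]
  ring

lemma convexOn_sum_comp_sub (hf : ∀ q ∈ t, ConvexOn ℝ univ (f q)) :
    ConvexOn ℝ univ fun θ : ι → ℝ => ∑ q ∈ t, f q (θ q.2 - θ q.1) := by
  refine ⟨convex_univ, fun θ _ η _ a b ha hb hab => ?_⟩
  simp only [Finset.smul_sum, ← Finset.sum_add_distrib, sub_apply_add_smul]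
  exact Finset.sum_le_sum fun q hq => (hf q hq).2 trivial trivial ha hb hab

lemma strictConvexOn_sum_comp_sub {s : Set (ι → ℝ)} (hs : Convex ℝ s)
    (hf : ∀ q ∈ t, StrictConvexOn ℝ univ (f q))
    (hsep : ∀ θ ∈ s, ∀ η ∈ s, θ ≠ η → ∃ q ∈ t, θ q.2 - θ q.1 ≠ η q.2 - η q.1) :
    StrictConvexOn ℝ s fun θ : ι → ℝ => ∑ q ∈ t, f q (θ q.2 - θ q.1) := by
  refine ⟨hs, fun θ hθ η hη hne a b ha hb hab => ?_⟩
  obtain ⟨q₀, hq₀, hq₀ne⟩ := hsep θ hθ η hη hne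
  simp only [Finset.smul_sum, ← Finset.sum_add_distrib, sub_apply_add_smul]
  exact Finset.sum_lt_sum (fun q hq => (hf q hq).convexOn.2 trivial trivial ha.le hb.le hab)
    ⟨q₀, hq₀, (hf q₀ hq₀).2 trivial trivial hq₀ne ha hb hab⟩

end PairwiseSum

def ltPairs (ι : Type*) [Fintype ι] [LinearOrder ι] : Finset (ι × ι) :=
  Finset.univ.filter fun q => q.1 < q.2

-- Each `g a > 0` bounds every small enough `m > 0`, and finitely many such conditions combine.
lemma Finset.exists_pos_forall_le {α : Type*} (t : Finset α) {g : α → ℝ}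
    (hg : ∀ a ∈ t, 0 < g a) : ∃ m > 0, ∀ a ∈ t, m ≤ g a :=
  (eventually_mem_nhdsWithin.and (t.eventually_all.2 fun a ha =>
    nhdsWithin_le_nhds (eventually_le_nhds (hg a ha)))).exists (f := 𝓝[>] (0 : ℝ))

lemma abs_le_of_sum_eq_zero {ι : Type*} [Fintype ι] {θ : ι → ℝ} (hθ : ∑ i, θ i = 0) {R : ℝ}
    (hR : ∀ i j, |θ j - θ i| ≤ R) (i : ι) : |θ i| ≤ R := by
  have hpos : (0 : ℝ) < Fintype.card ι := by exact_mod_cast Fintype.card_pos_iff.2 ⟨i⟩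
  have hcenter : (Fintype.card ι : ℝ) * θ i = ∑ j, (θ i - θ j) := by
    rw [Finset.sum_sub_distrib, hθ, sub_zero, Finset.sum_const, Finset.card_univ, nsmul_eq_mul]
  refine le_of_mul_le_mul_left ?_ hpos
  calc (Fintype.card ι : ℝ) * |θ i| = |∑ j, (θ i - θ j)| := by
        rw [← hcenter, abs_mul, abs_of_pos hpos]
    _ ≤ ∑ j, |θ i - θ j| := Finset.abs_sum_le_sum_abs _ _
    _ ≤ ∑ _j : ι, R := Finset.sum_le_sum fun j _ => abs_sub_comm (θ i) (θ j) ▸ hR i j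
    _ = Fintype.card ι * R := by simp

lemma exists_ltPairs_sub_ne {ι : Type*} [Fintype ι] [LinearOrder ι] {θ η : ι → ℝ}
    (hθ : ∑ i, θ i = 0) (hη : ∑ i, η i = 0) (hne : θ ≠ η) :
    ∃ q ∈ ltPairs ι, θ q.2 - θ q.1 ≠ η q.2 - η q.1 := by
  by_contra! h
  have hsub (i j : ι) : (θ - η) j - (θ - η) i = 0 := by
    rcases lt_trichotomy i j with hij | rfl | hij
    · have := h (i, j) (by simp [ltPairs, hij])
      simp only [Pi.sub_apply]; linarith
    · exact sub_self _
    · have := h (j, i) (by simp [ltPairs, hij])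
      simp only [Pi.sub_apply]; linarith
  have hδ : ∑ i, (θ - η) i = 0 := by simp [Finset.sum_sub_distrib, hθ, hη]
  refine hne (funext fun i => sub_eq_zero.1 (abs_nonpos_iff.1 ?_))
  exact abs_le_of_sum_eq_zero hδ (fun i j => (hsub i j).symm ▸ abs_zero.le) i

section Objective

variable {n : ℕ} (phat : Fin n → Fin n → ℝ)

lemma empObjective_eq_sum_pairLoss (θ : Fin n → ℝ) :
    empObjective phat θ = ∑ q ∈ ltPairs (Fin n), pairLoss (phat q.1 q.2) (θ q.2 - θ q.1) := by
  rw [empObjective, ltPairs, Finset.sum_filter, ← Finset.univ_product_univ, Finset.sum_product]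
  refine Finset.sum_congr rfl fun i _ => Finset.sum_congr rfl fun j _ => if_congr Iff.rfl ?_ rfl
  rw [← neg_sub (θ j), neg_mul, ← mul_neg, neg_log_logistic, sub_eq_add_neg, ← mul_neg,
    neg_log_logistic, neg_neg, softplus_neg, pairLoss]
  ring

lemma convexOn_empObjective : ConvexOn ℝ univ (empObjective phat) :=
  (convexOn_sum_comp_sub fun _ _ => (strictConvexOn_pairLoss _).convexOn).congr
    fun θ _ => (empObjective_eq_sum_pairLoss phat θ).symm

lemma strictConvexOn_empObjective :
    StrictConvexOn ℝ {θ : Fin n → ℝ | ∑ i, θ i = 0} (empObjective phat) := by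
  have hconvex : Convex ℝ {θ : Fin n → ℝ | ∑ i, θ i = 0} :=
    convex_hyperplane
      ⟨fun θ η => Finset.sum_add_distrib, fun c θ => (Finset.mul_sum _ _ _).symm⟩ 0
  refine (strictConvexOn_sum_comp_sub hconvex (fun _ _ => strictConvexOn_pairLoss _)
    fun θ hθ η hη hne => exists_ltPairs_sub_ne hθ hη hne).congr
    fun θ _ => (empObjective_eq_sum_pairLoss phat θ).symm

lemma isMinOn_empObjective_of_eq_logistic {u : Fin n → ℝ}
    (hu : ∀ i j, i < j → phat i j = logistic (u j - u i)) :
    IsMinOn (empObjective phat) univ u := by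
  refine isMinOn_iff.2 fun η _ => ?_
  rw [empObjective_eq_sum_pairLoss, empObjective_eq_sum_pairLoss]
  refine Finset.sum_le_sum fun q hq => ?_
  rw [hu _ _ (Finset.mem_filter.1 hq).2, logistic_eq_sigmoid]
  exact isMinOn_iff.1 (isMinOn_pairLoss_sigmoid _) _ (mem_univ _)

variable {phat} {m : ℝ} (hm0 : 0 ≤ m)
  (hm : ∀ q ∈ ltPairs (Fin n), m ≤ phat q.1 q.2 ∧ m ≤ 1 - phat q.1 q.2)
include hm0 hm

lemma empObjective_nonneg (θ : Fin n → ℝ) : 0 ≤ empObjective phat θ := by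
  rw [empObjective_eq_sum_pairLoss]
  exact Finset.sum_nonneg fun q hq =>
    pairLoss_nonneg (hm0.trans (hm q hq).1) (hm0.trans (hm q hq).2) _

lemma pairLoss_le_empObjective (θ : Fin n → ℝ) {q : Fin n × Fin n} (hq : q ∈ ltPairs (Fin n)) :
    pairLoss (phat q.1 q.2) (θ q.2 - θ q.1) ≤ empObjective phat θ := by
  rw [empObjective_eq_sum_pairLoss]
  exact Finset.single_le_sum (f := fun q => pairLoss (phat q.1 q.2) (θ q.2 - θ q.1))
    (fun q hq => pairLoss_nonneg (hm0.trans (hm q hq).1) (hm0.trans (hm q hq).2) _) hq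

lemma mul_abs_sub_le_empObjective (θ : Fin n → ℝ) (i j : Fin n) :
    m * |θ j - θ i| ≤ empObjective phat θ := by
  wlog hij : i ≤ j generalizing i j
  · rw [abs_sub_comm]; exact this j i (le_of_not_ge hij)
  rcases hij.lt_or_eq with hij | rfl
  · have hq : (i, j) ∈ ltPairs (Fin n) := Finset.mem_filter.2 ⟨Finset.mem_univ _, hij⟩
    exact (mul_abs_le_pairLoss (hm _ hq).1 (hm _ hq).2 _).trans
      (pairLoss_le_empObjective hm0 hm θ hq)
  · rw [sub_self, abs_zero, mul_zero]
    exact empObjective_nonneg hm0 hm θ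

end Objective

lemma exists_isMinOn_empObjective {n : ℕ} {phat : Fin n → Fin n → ℝ}
    (hphat : ∀ i j : Fin n, i < j → phat i j ∈ Ioo (0 : ℝ) 1) :
    ∃ θ ∈ {θ : Fin n → ℝ | ∑ i, θ i = 0},
      IsMinOn (empObjective phat) {θ : Fin n → ℝ | ∑ i, θ i = 0} θ := by
  set H := {θ : Fin n → ℝ | ∑ i, θ i = 0}
  obtain ⟨m, hm0, hm⟩ := (ltPairs (Fin n)).exists_pos_forall_le
    (g := fun q => min (phat q.1 q.2) (1 - phat q.1 q.2)) fun q hq => by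
      have := hphat q.1 q.2 (Finset.mem_filter.1 hq).2
      exact lt_min this.1 (sub_pos.2 this.2)
  have hm' (q) (hq : q ∈ ltPairs (Fin n)) : m ≤ phat q.1 q.2 ∧ m ≤ 1 - phat q.1 q.2 :=
    le_min_iff.1 (hm q hq)
  have hbound (θ : Fin n → ℝ) (hθ : θ ∈ H) : ‖θ‖ ≤ empObjective phat θ / m := by
    refine (pi_norm_le_iff_of_nonneg (div_nonneg (empObjective_nonneg hm0.le hm' θ) hm0.le)).2
      fun i => (norm_eq_abs _).trans_le (abs_le_of_sum_eq_zero hθ (fun i j => ?_) i)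
    exact (le_div_iff₀' hm0).2 (mul_abs_sub_le_empObjective hm0.le hm' θ i j)
  have hclosed : IsClosed H := isClosed_eq (by fun_prop) continuous_const
  refine ((convexOn_empObjective phat).continuousOn isOpen_univ).mono (subset_univ H)
    |>.exists_isMinOn' hclosed (x₀ := 0) (by simp [H]) ?_
  filter_upwards [mem_inf_of_left (isCompact_closedBall (0 : Fin n → ℝ)
    (empObjective phat 0 / m)).compl_mem_cocompact, mem_inf_of_right (mem_principal_self H)]
    with θ hθ hθH
  by_contra! hlt
  exact hθ (mem_closedBall_zero_iff.2 ((hbound θ hθH).trans (by gcongr)))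

theorem empObjective_exists_unique_minimizer_general {n : ℕ}
    (phat : Fin n → Fin n → ℝ)
    (hphat : ∀ i j : Fin n, i < j → phat i j ∈ Set.Ioo (0 : ℝ) 1) :
    ConvexOn ℝ Set.univ (empObjective phat) ∧
    (∃! θ : Fin n → ℝ, (∑ i, θ i) = 0 ∧
      ∀ η : Fin n → ℝ, (∑ i, η i) = 0 → empObjective phat θ ≤ empObjective phat η) ∧
    (∀ u : Fin n → ℝ, (∑ i, u i) = 0 →
      (∀ i j : Fin n, i < j → phat i j = logistic (u j - u i)) →
      ∀ θ : Fin n → ℝ, ((∑ i, θ i) = 0 ∧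
        ∀ η : Fin n → ℝ, (∑ i, η i) = 0 → empObjective phat θ ≤ empObjective phat η) →
      θ = u) := by
  have hstrict := strictConvexOn_empObjective phat
  refine ⟨convexOn_empObjective phat, ?_, fun u hu hreal θ hθ => ?_⟩
  · obtain ⟨θ, hθ, hmin⟩ := exists_isMinOn_empObjective hphat
    exact ⟨θ, ⟨hθ, isMinOn_iff.1 hmin⟩, fun η hη =>
      hstrict.eq_of_isMinOn (isMinOn_iff.2 hη.2) hmin hη.1 hθ⟩
  · exact hstrict.eq_of_isMinOn (isMinOn_iff.2 hθ.2)
      ((isMinOn_empObjective_of_eq_logistic phat hreal).on_subset (subset_univ _)) hθ.1 hu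

/-- existence and uniqueness of the empirical M-estimator: if
`n ≥ 2` and `p̂_ij ∈ (0,1)` for all `i < j`, then `𝓛_n` is convex on `ℝⁿ` and has
a unique minimizer over the centered hyperplane `{θ : Σᵢ θᵢ = 0}`; moreover, if
`p̂_ij = σ(u_j - u_i)` for a centered `u`, this minimizer equals `u`. -/
theorem empObjective_exists_unique_minimizer {n : ℕ} (hn : 2 ≤ n)
    (phat : Fin n → Fin n → ℝ)
    (hphat : ∀ i j : Fin n, i < j → phat i j ∈ Set.Ioo (0 : ℝ) 1) :
    ConvexOn ℝ Set.univ (empObjective phat) ∧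
    (∃! θ : Fin n → ℝ, (∑ i, θ i) = 0 ∧
      ∀ η : Fin n → ℝ, (∑ i, η i) = 0 → empObjective phat θ ≤ empObjective phat η) ∧
    (∀ u : Fin n → ℝ, (∑ i, u i) = 0 →
      (∀ i j : Fin n, i < j → phat i j = logistic (u j - u i)) →
      ∀ θ : Fin n → ℝ, ((∑ i, θ i) = 0 ∧
        ∀ η : Fin n → ℝ, (∑ i, η i) = 0 → empObjective phat θ ≤ empObjective phat η) →
      θ = u) :=
  empObjective_exists_unique_minimizer_general phat hphat
end

section
/- (Spectral aggregation recovers BTL strengths.) Let n ≥ 2, let s₁,…,s_n > 0, and set p_ij = s_j/(s_i + s_j) for i ≠ j and p_ii = 0. Define the matrix T by T_ij = p_ij/(n−1) for i ≠ j and T_ii = 1 − (1/(n−1)) Σ_{k≠i} p_ik. Then T is a row-stochastic matrix (all entries are nonnegative and each row sums to 1), and the probability vector π with π_i = s_i / (s₁ + ⋯ + s_n) satisfies the detailed-balance relations π_i T_ij = π_j T_ji for all i, j, hence is a stationary distribution of T: Σ_i π_i T_ij = π_j for every j. -/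
/-!
`T` is the lazy chain whose off-diagonal rates are `p i j / (n - 1)`: each rate is at most
`1 / (n - 1)` and there are `n - 1` of them, so the holding probabilities are nonnegative.
Detailed balance for `π ∝ s` reduces to the symmetry of `s i * p i j = s i * s j / (s i + s j)`,
and summing detailed balance over `i` against the unit row sums gives stationarity.
-/

open Finset

section LazyChain

variable {ι R : Type*} [Fintype ι] [DecidableEq ι]

def lazyChain [Ring R] (q : ι → ι → R) (i j : ι) : R :=
  if i = j then 1 - ∑ k ∈ univ.erase i, q i k else q i j

lemma sum_lazyChain [Ring R] (q : ι → ι → R) (i : ι) : ∑ j, lazyChain q i j = 1 := by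
  rw [← add_sum_erase _ _ (mem_univ i)]
  have hoff : ∑ j ∈ univ.erase i, lazyChain q i j = ∑ j ∈ univ.erase i, q i j :=
    sum_congr rfl fun j hj => if_neg (ne_of_mem_erase hj).symm
  rw [hoff, lazyChain, if_pos rfl, sub_add_cancel]

lemma lazyChain_nonneg [Ring R] [PartialOrder R] [IsOrderedRing R] {q : ι → ι → R}
    (hq : ∀ i j, 0 ≤ q i j) (hq_sum : ∀ i, ∑ k ∈ univ.erase i, q i k ≤ 1) (i j : ι) :
    0 ≤ lazyChain q i j := by
  unfold lazyChain
  split_ifs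
  · exact sub_nonneg.mpr (hq_sum i)
  · exact hq i j

lemma lazyChain_detailed_balance [CommRing R] {π : ι → R} {q : ι → ι → R}
    (h : ∀ i j, i ≠ j → π i * q i j = π j * q j i) (i j : ι) :
    π i * lazyChain q i j = π j * lazyChain q j i := by
  by_cases hij : i = j
  · rw [hij]
  · rw [lazyChain, lazyChain, if_neg hij, if_neg (Ne.symm hij), h i j hij]

end LazyChain

lemma sum_mul_eq_of_detailed_balance {ι R : Type*} [Fintype ι] [CommSemiring R]
    {π : ι → R} {T : ι → ι → R} (hdb : ∀ i j, π i * T i j = π j * T j i)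
    (hT : ∀ i, ∑ j, T i j = 1) (j : ι) : ∑ i, π i * T i j = π j := by
  simp_rw [hdb _ j, ← mul_sum, hT, mul_one]

lemma sum_erase_le_card_sub_one {ι R : Type*} [Fintype ι] [DecidableEq ι] [Ring R]
    [PartialOrder R] [IsOrderedRing R] {f : ι → R} (hf : ∀ k, f k ≤ 1) (i : ι) :
    ∑ k ∈ univ.erase i, f k ≤ (Fintype.card ι : R) - 1 := by
  calc ∑ k ∈ univ.erase i, f k
      ≤ ∑ _k ∈ univ.erase i, (1 : R) := sum_le_sum fun k _ => hf k
    _ = (Fintype.card ι : R) - 1 := by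
      rw [sum_const, card_erase_of_mem (mem_univ i), nsmul_one, card_univ,
        Nat.cast_pred (Fintype.card_pos_iff.mpr ⟨i⟩)]

section BradleyTerry

variable {ι K : Type*}

lemma btl_detailed_balance [DecidableEq ι] [Field K] {s : ι → K} {p : ι → ι → K}
    (hp : ∀ i j, p i j = if i = j then 0 else s j / (s i + s j)) (i j : ι) :
    s i * p i j = s j * p j i := by
  rw [hp, hp]
  split_ifs with hij hji hji
  · rw [hij]
  · exact absurd hij.symm hji
  · exact absurd hji.symm hij
  · rw [mul_div_assoc', mul_div_assoc', mul_comm, add_comm]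

lemma btl_nonneg [DecidableEq ι] [Field K] [LinearOrder K] [IsStrictOrderedRing K]
    {s : ι → K} {p : ι → ι → K}
    (hs : ∀ i, 0 < s i) (hp : ∀ i j, p i j = if i = j then 0 else s j / (s i + s j))
    (i j : ι) :
    0 ≤ p i j := by
  have := hs i; have := hs j
  rw [hp]; split_ifs <;> positivity

lemma btl_le_one [DecidableEq ι] [Field K] [LinearOrder K] [IsStrictOrderedRing K]
    {s : ι → K} {p : ι → ι → K}
    (hs : ∀ i, 0 < s i) (hp : ∀ i j, p i j = if i = j then 0 else s j / (s i + s j))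
    (i j : ι) :
    p i j ≤ 1 := by
  have := hs i; have := hs j
  rw [hp]; split_ifs
  · exact zero_le_one
  · rw [div_le_one (by positivity)]; linarith

end BradleyTerry

/-- spectral aggregation recovers BTL strengths: given strengths
`s₁, …, s_n > 0` and BTL preferences `p_ij = s_j/(s_i + s_j)` (with `p_ii = 0`),
the matrix `T` with `T_ij = p_ij/(n-1)` for `i ≠ j` and
`T_ii = 1 - (1/(n-1)) Σ_{k≠i} p_ik` is row-stochastic, and the probability
vector `π_i = s_i / Σ_k s_k` satisfies detailed balance `π_i T_ij = π_j T_ji`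
and is stationary: `Σ_i π_i T_ij = π_j` for all `j`. -/
theorem spectral_recovers_BTL {n : ℕ} (hn : 2 ≤ n) (s : Fin n → ℝ)
    (hs : ∀ i, 0 < s i)
    (p : Fin n → Fin n → ℝ)
    (hp : ∀ i j : Fin n, p i j = if i = j then 0 else s j / (s i + s j))
    (T : Fin n → Fin n → ℝ)
    (hT : ∀ i j : Fin n, T i j =
      if i = j then 1 - (1 / ((n : ℝ) - 1)) * ∑ k ∈ Finset.univ.erase i, p i k
      else p i j / ((n : ℝ) - 1))
    (π : Fin n → ℝ) (hπ : ∀ i, π i = s i / ∑ k, s k) :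
    (∀ i j : Fin n, 0 ≤ T i j) ∧
    (∀ i : Fin n, ∑ j, T i j = 1) ∧
    (∀ i, 0 ≤ π i) ∧ (∑ i, π i) = 1 ∧
    (∀ i j : Fin n, π i * T i j = π j * T j i) ∧
    (∀ j : Fin n, ∑ i, π i * T i j = π j) := by
  have hn1 : (0 : ℝ) < n - 1 := by
    have : (2 : ℝ) ≤ n := by exact_mod_cast hn
    linarith
  have hS : 0 < ∑ k, s k :=
    sum_pos (fun i _ => hs i) (univ_nonempty_iff.mpr ⟨⟨0, by omega⟩⟩)
  obtain rfl : T = lazyChain fun i j => p i j / ((n : ℝ) - 1) := by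
    ext i j
    rw [hT, lazyChain, ← sum_div, one_div_mul_eq_div]
  have hπ_nonneg (i : Fin n) : 0 ≤ π i := hπ i ▸ div_nonneg (hs i).le hS.le
  have hπ_sum : ∑ i, π i = 1 := by simp_rw [hπ, ← sum_div, div_self hS.ne']
  have hdb := lazyChain_detailed_balance (π := π) (q := fun i j => p i j / ((n : ℝ) - 1))
    fun i j _ => by rw [hπ, hπ, div_mul_div_comm, div_mul_div_comm, btl_detailed_balance hp]
  have hrate_sum (i : Fin n) : ∑ k ∈ univ.erase i, p i k / ((n : ℝ) - 1) ≤ 1 := by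
    rw [← sum_div, div_le_one hn1]
    simpa using sum_erase_le_card_sub_one (btl_le_one hs hp i) i
  exact ⟨lazyChain_nonneg (fun i j => div_nonneg (btl_nonneg hs hp i j) hn1.le) hrate_sum,
    sum_lazyChain _, hπ_nonneg, hπ_sum, hdb,
    sum_mul_eq_of_detailed_balance hdb (sum_lazyChain _)⟩
end
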